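/- Assume var(f̂) ≠ 0. For each k ∈ {1,…,d}, the first-order Sobol' index S_k = var(E(f̂ | x_k)) / var(f̂) of the ELM surrogate satisfies S_k = (1/var(f̂)) Σ_{j=1}^n Σ_{i=1}^n β_j β_i e^{b_j + b_i} ( ε(w_{j,k} + w_{i,k}) − ε(w_{j,k}) ε(w_{i,k}) ) ∏_{l≠k} ε(w_{j,l}) ε(w_{i,l}). -/

import Mathlib

/-!
Each neuron factorises over the coordinates, so fixing `x_k = t` and integrating out the other
coordinates (Fubini on the unit cube, with `∫₀¹ e^{ct} dt = ε(c)`) turns `E(f̂ | x_k)` into an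
exponential polynomial `t ↦ Σ_j c_j e^{w_{j,k} t}` with `c_j = β_j e^{b_j} ∏_{l≠k} ε(w_{j,l})`.
Its square is again an exponential polynomial, with exponents `w_{j,k} + w_{i,k}`, so both
moments on `[0,1]` are finite sums of values of `ε`.
-/

open MeasureTheory Real

/-- The function ε(t) = (e^t − 1)/t for t ≠ 0, and ε(0) = 1. -/
noncomputable def eps (t : ℝ) : ℝ := if t = 0 then 1 else (Real.exp t - 1) / t

/-- ELM surrogate with exponential activation:
`f̂(x) = Σ_{j=1}^n β_j exp(w_jᵀ x + b_j)`. -/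
noncomputable def elm {d n : ℕ} (β b : Fin n → ℝ) (w : Fin n → Fin d → ℝ)
    (x : Fin d → ℝ) : ℝ :=
  ∑ j, β j * Real.exp ((∑ l, w j l * x l) + b j)


/-- `g_k(t) = E(f̂ | x_k = t)`: the integral of the ELM surrogate over all
coordinates except the `k`-th one, which is fixed to `t`. -/
noncomputable def gk {d n : ℕ} (β b : Fin n → ℝ) (w : Fin n → Fin d → ℝ)
    (k : Fin d) (t : ℝ) : ℝ :=
  ∫ y in Set.Icc (0 : Fin d → ℝ) 1, elm β b w (Function.update y k t)

/-- Variance of the ELM surrogate over the uniform measure on `[0,1]^d`. -/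
noncomputable def elmVar {d n : ℕ} (β b : Fin n → ℝ) (w : Fin n → Fin d → ℝ) : ℝ :=
  (∫ x in Set.Icc (0 : Fin d → ℝ) 1, (elm β b w x) ^ 2) -
    (∫ x in Set.Icc (0 : Fin d → ℝ) 1, elm β b w x) ^ 2

lemma eps_zero : eps 0 = 1 := if_pos rfl

lemma integral_exp_mul_Icc_zero_one (c : ℝ) :
    ∫ t in Set.Icc (0 : ℝ) 1, exp (c * t) = eps c := by
  rw [integral_Icc_eq_integral_Ioc, ← intervalIntegral.integral_of_le zero_le_one]
  by_cases hc : c = 0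
  · simp [hc, eps]
  · rw [intervalIntegral.integral_comp_mul_left (fun t => exp t) hc, integral_exp]
    simp [eps, hc, div_eq_inv_mul]

lemma integral_exp_sum_mul_Icc_zero_one {ι : Type*} [Fintype ι] (v : ι → ℝ) :
    ∫ y in Set.Icc (0 : ι → ℝ) 1, exp (∑ l, v l * y l) = ∏ l, eps (v l) := by
  simp_rw [exp_sum, ← Set.pi_univ_Icc, volume_pi, Measure.restrict_pi_pi]
  rw [integral_fintype_prod_eq_prod (fun l t => exp (v l * t))]
  exact Finset.prod_congr rfl fun l _ => integral_exp_mul_Icc_zero_one (v l)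

section ExpPoly

variable {ι : Type*} [Fintype ι] (c a : ι → ℝ)

noncomputable def expPoly (t : ℝ) : ℝ := ∑ j, c j * exp (a j * t)

lemma integral_expPoly : ∫ t in Set.Icc (0 : ℝ) 1, expPoly c a t = ∑ j, c j * eps (a j) := by
  unfold expPoly
  rw [integral_finsetSum _ fun j _ =>
    (by fun_prop : Continuous fun t => c j * exp (a j * t)).integrableOn_Icc]
  simp_rw [integral_const_mul, integral_exp_mul_Icc_zero_one]

lemma expPoly_sq :
    (fun t => expPoly c a t ^ 2) =
      expPoly (fun p : ι × ι => c p.1 * c p.2) (fun p => a p.1 + a p.2) := by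
  ext t
  simp only [expPoly, sq, Finset.sum_mul_sum, ← Finset.sum_product', add_mul, exp_add]
  exact Finset.sum_congr rfl fun p _ => by ring

lemma integral_expPoly_sq_sub_sq :
    (∫ t in Set.Icc (0 : ℝ) 1, expPoly c a t ^ 2) -
        (∫ t in Set.Icc (0 : ℝ) 1, expPoly c a t) ^ 2 =
      ∑ j, ∑ i, c j * c i * (eps (a j + a i) - eps (a j) * eps (a i)) := by
  rw [expPoly_sq, integral_expPoly, integral_expPoly, sq, Finset.sum_mul_sum, Fintype.sum_prod_type,
    ← Finset.sum_sub_distrib]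
  refine Finset.sum_congr rfl fun j _ => ?_
  rw [← Finset.sum_sub_distrib]
  exact Finset.sum_congr rfl fun i _ => by ring

end ExpPoly

section UpdateCoordinate

variable {ι : Type*} [Fintype ι] [DecidableEq ι]

lemma sum_mul_update_eq (u y : ι → ℝ) (k : ι) (t : ℝ) :
    ∑ l, u l * Function.update y k t l = u k * t + ∑ l, Function.update u k 0 l * y l := by
  rw [← Finset.add_sum_erase _ _ (Finset.mem_univ k),
    ← Finset.add_sum_erase _ _ (Finset.mem_univ k),
    Function.update_self, Function.update_self, zero_mul, zero_add]
  congr 1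
  refine Finset.sum_congr rfl fun l hl => ?_
  have hlk := Finset.ne_of_mem_erase hl
  rw [Function.update_of_ne hlk, Function.update_of_ne hlk]

lemma prod_eps_update_zero (u : ι → ℝ) (k : ι) :
    ∏ l, eps (Function.update u k 0 l) = ∏ l ∈ Finset.univ.erase k, eps (u l) := by
  rw [← Finset.mul_prod_erase _ _ (Finset.mem_univ k), Function.update_self, eps_zero, one_mul]
  exact Finset.prod_congr rfl fun l hl => by rw [Function.update_of_ne (Finset.ne_of_mem_erase hl)]

end UpdateCoordinate

lemma gk_eq_expPoly {d n : ℕ} (β b : Fin n → ℝ) (w : Fin n → Fin d → ℝ) (k : Fin d) :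
    gk β b w k = expPoly (fun j => β j * exp (b j) * ∏ l ∈ Finset.univ.erase k, eps (w j l))
      (fun j => w j k) := by
  ext t
  have elm_update (y : Fin d → ℝ) : elm β b w (Function.update y k t) =
      ∑ j, β j * exp (b j) * exp (w j k * t) * exp (∑ l, Function.update (w j) k 0 l * y l) :=
    Finset.sum_congr rfl fun j _ => by rw [sum_mul_update_eq, exp_add, exp_add]; ring
  simp_rw [gk, elm_update]
  rw [integral_finsetSum _ fun j _ => (by fun_prop : Continuous _).integrableOn_Icc]
  simp_rw [integral_const_mul, integral_exp_sum_mul_Icc_zero_one, prod_eps_update_zero, expPoly]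
  exact Finset.sum_congr rfl fun j _ => by ring

theorem elm_first_order_sobol_general (d n : ℕ)
    (β b : Fin n → ℝ) (w : Fin n → Fin d → ℝ) (k : Fin d) :
    ((∫ t in Set.Icc (0 : ℝ) 1, (gk β b w k t) ^ 2) -
        (∫ t in Set.Icc (0 : ℝ) 1, gk β b w k t) ^ 2) / elmVar β b w =
      (1 / elmVar β b w) *
        ∑ j, ∑ i, β j * β i * Real.exp (b j + b i) *
          (eps (w j k + w i k) - eps (w j k) * eps (w i k)) *
          ∏ l ∈ Finset.univ.erase k, eps (w j l) * eps (w i l) := by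
  rw [gk_eq_expPoly, integral_expPoly_sq_sub_sq, one_div_mul_eq_div]
  congr 1
  refine Finset.sum_congr rfl fun j _ => Finset.sum_congr rfl fun i _ => ?_
  rw [exp_add, Finset.prod_mul_distrib]
  ring

/-- Assuming `var(f̂) ≠ 0`, the first-order Sobol' index
`S_k = var(E(f̂ | x_k)) / var(f̂)` of the ELM surrogate satisfies
`S_k = (1/var(f̂)) Σ_j Σ_i β_j β_i e^{b_j+b_i}
  (ε(w_{j,k}+w_{i,k}) − ε(w_{j,k}) ε(w_{i,k})) ∏_{l≠k} ε(w_{j,l}) ε(w_{i,l})`. -/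
theorem elm_first_order_sobol (d n : ℕ) (hd : 0 < d) (hn : 0 < n)
    (β b : Fin n → ℝ) (w : Fin n → Fin d → ℝ) (k : Fin d)
    (hvar : elmVar β b w ≠ 0) :
    ((∫ t in Set.Icc (0 : ℝ) 1, (gk β b w k t) ^ 2) -
        (∫ t in Set.Icc (0 : ℝ) 1, gk β b w k t) ^ 2) / elmVar β b w =
      (1 / elmVar β b w) *
        ∑ j, ∑ i, β j * β i * Real.exp (b j + b i) *
          (eps (w j k + w i k) - eps (w j k) * eps (w i k)) *
          ∏ l ∈ Finset.univ.erase k, eps (w j l) * eps (w i l) :=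
  elm_first_order_sobol_general d n β b w k
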